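/- arXiv:math/0202249 — 4 statements merged into one kernel-verified Lean document; each statement's English description precedes it below -/
import Mathlib

section
/- Let r₀ ∈ (1/e, 1) and let u*(r) = -log r - log(-log r). There exists a C² function u : [0,1) → ℝ such that u(r) = u*(r) for all r ∈ [r₀, 1), u'(0) = 0, u'(r) > 0 for r ∈ (0,1), and u''(r) > 0 for r ∈ (0,1). -/
open Set Filter

namespace Stmt7Aux

noncomputable def f (r : ℝ) : ℝ := -Real.log r - Real.log (-Real.log r)
noncomputable def F1 (r : ℝ) : ℝ := -r⁻¹ - (r * Real.log r)⁻¹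
noncomputable def F2 (r : ℝ) : ℝ := (r ^ 2)⁻¹ + ((r * Real.log r) ^ 2)⁻¹ * (Real.log r + 1)

noncomputable def g (C0 K c : ℝ) (r : ℝ) : ℝ := C0 + K / (2 * c) * Real.exp (c * r ^ 2)
noncomputable def G1 (K c : ℝ) (r : ℝ) : ℝ := K * r * Real.exp (c * r ^ 2)
noncomputable def G2 (K c : ℝ) (r : ℝ) : ℝ := K * Real.exp (c * r ^ 2) * (1 + 2 * c * r ^ 2)

lemma log_ne {r : ℝ} (h0 : 0 < r) (h1 : r < 1) : Real.log r ≠ 0 :=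
  (Real.log_neg h0 h1).ne

lemma mul_log_ne {r : ℝ} (h0 : 0 < r) (h1 : r < 1) : r * Real.log r ≠ 0 :=
  (mul_neg_of_pos_of_neg h0 (Real.log_neg h0 h1)).ne

lemma hf1 {r : ℝ} (h0 : 0 < r) (h1 : r < 1) : HasDerivAt f (F1 r) r := by
  have hlr : Real.log r < 0 := Real.log_neg h0 h1
  have h2 : HasDerivAt (fun x => -Real.log x) (-r⁻¹) r :=
    (Real.hasDerivAt_log h0.ne').neg
  have h3 : HasDerivAt (fun x => Real.log (-Real.log x)) ((-Real.log r)⁻¹ * -r⁻¹) r :=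
    (Real.hasDerivAt_log (by simpa using hlr.ne)).comp r h2
  have h4 := h2.sub h3
  refine h4.congr_deriv ?_
  unfold F1
  field_simp

lemma hf2 {r : ℝ} (h0 : 0 < r) (h1 : r < 1) : HasDerivAt F1 (F2 r) r := by
  have hml : r * Real.log r ≠ 0 := mul_log_ne h0 h1
  have h2 : HasDerivAt (fun x => x * Real.log x) (Real.log r + 1) r :=
    Real.hasDerivAt_mul_log h0.ne'
  have h3 : HasDerivAt (fun x => (x * Real.log x)⁻¹)
      (-((r * Real.log r) ^ 2)⁻¹ * (Real.log r + 1)) r :=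
    (hasDerivAt_inv hml).comp r h2
  have h4 := ((hasDerivAt_inv h0.ne').neg).sub h3
  refine h4.congr_deriv ?_
  unfold F2
  ring

lemma F1_pos {r : ℝ} (h0 : Real.exp (-1) < r) (h1 : r < 1) : 0 < F1 r := by
  have hr : 0 < r := lt_trans (Real.exp_pos _) h0
  have hlr : Real.log r < 0 := Real.log_neg hr h1
  have hlr1 : -1 < Real.log r := (Real.lt_log_iff_exp_lt hr).mpr h0
  have : F1 r = (Real.log r + 1) / (r * -Real.log r) := by
    unfold F1; field_simp [hr.ne', hlr.ne]; ring
  rw [this]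
  apply div_pos (by linarith) (mul_pos hr (by linarith))

lemma F2_pos {r : ℝ} (h0 : 0 < r) (h1 : r < 1) : 0 < F2 r := by
  have hlr : Real.log r < 0 := Real.log_neg h0 h1
  set L := Real.log r
  have : F2 r = (L ^ 2 + L + 1) / (r * L) ^ 2 := by
    unfold F2; change (r ^ 2)⁻¹ + ((r * L) ^ 2)⁻¹ * (L + 1) = _; field_simp [h0.ne', hlr.ne]; ring
  rw [this]
  apply div_pos (by nlinarith [sq_nonneg (2 * L + 1)])
  exact (pow_ne_zero 2 (mul_log_ne h0 h1)).symm.lt_of_le (sq_nonneg _)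

lemma F2_contAt {r : ℝ} (h0 : 0 < r) (h1 : r < 1) : ContinuousAt F2 r := by
  have hl : ContinuousAt Real.log r := Real.continuousAt_log h0.ne'
  exact ((continuousAt_id.pow 2).inv₀ (pow_ne_zero 2 h0.ne')).add
    ((((continuousAt_id.mul hl).pow 2).inv₀ (pow_ne_zero 2 (mul_log_ne h0 h1))).mul
      (hl.add continuousAt_const))

lemma hg1 {C0 K c : ℝ} (hc : c ≠ 0) (r : ℝ) : HasDerivAt (g C0 K c) (G1 K c r) r := by
  have h1 : HasDerivAt (fun x : ℝ => c * x ^ 2) (c * (2 * r)) r := by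
    simpa using (hasDerivAt_pow 2 r).const_mul c
  have h2 : HasDerivAt (fun x : ℝ => Real.exp (c * x ^ 2))
      (Real.exp (c * r ^ 2) * (c * (2 * r))) r :=
    (Real.hasDerivAt_exp _).comp r h1
  have h3 := (h2.const_mul (K / (2 * c))).const_add C0
  refine h3.congr_deriv ?_
  unfold G1
  field_simp

lemma hg2 (K c : ℝ) (r : ℝ) : HasDerivAt (G1 K c) (G2 K c r) r := by
  have h1 : HasDerivAt (fun x : ℝ => c * x ^ 2) (c * (2 * r)) r := by
    simpa using (hasDerivAt_pow 2 r).const_mul c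
  have h2 : HasDerivAt (fun x : ℝ => Real.exp (c * x ^ 2))
      (Real.exp (c * r ^ 2) * (c * (2 * r))) r :=
    (Real.hasDerivAt_exp _).comp r h1
  have h0 : HasDerivAt (fun x : ℝ => K * x) K r := by
    simpa using (hasDerivAt_id r).const_mul K
  have h3 := h0.mul h2
  refine h3.congr_deriv ?_
  unfold G2
  ring

lemma G1_cont (K c : ℝ) : Continuous (G1 K c) := by
  unfold G1; fun_prop

lemma G2_cont (K c : ℝ) : Continuous (G2 K c) := by
  unfold G2; fun_prop

end Stmt7Aux

open Stmt7Aux in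
/-- For `r₀ ∈ (1/e, 1)` there is a `C²` function `u` on `[0,1)` agreeing with
`u*(r) = -log r - log(-log r)` on `[r₀, 1)`, with `u'(0) = 0`, `u' > 0` and
`u'' > 0` on `(0,1)`. -/
theorem stmt_7 (r₀ : ℝ) (hr₀ : r₀ ∈ Set.Ioo (Real.exp (-1)) 1) :
    ∃ u : ℝ → ℝ, ContDiffOn ℝ 2 u (Set.Ico (0:ℝ) 1) ∧
      (∀ r ∈ Set.Ico r₀ (1:ℝ), u r = -Real.log r - Real.log (-Real.log r)) ∧
      deriv u 0 = 0 ∧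
      (∀ r ∈ Set.Ioo (0:ℝ) 1, 0 < deriv u r) ∧
      (∀ r ∈ Set.Ioo (0:ℝ) 1, 0 < deriv (deriv u) r) := by
  obtain ⟨hre, hr1⟩ := hr₀
  have hr0 : 0 < r₀ := lt_trans (Real.exp_pos _) hre
  set L := Real.log r₀ with hLdef
  have hL0 : L < 0 := Real.log_neg hr0 hr1
  have hL1 : -1 < L := (Real.lt_log_iff_exp_lt hr0).mpr hre
  have hL1' : 0 < L + 1 := by linarith
  set A : ℝ := -(L + 1) / (r₀ * L) with hA
  have hApos : 0 < A := div_pos_of_neg_of_neg (by linarith) (mul_neg_of_pos_of_neg hr0 hL0)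
  set c : ℝ := -(2 * L ^ 2 + 2 * L + 1) / (2 * r₀ ^ 2 * L * (L + 1)) with hc
  have hcpos : 0 < c := by
    apply div_pos_of_neg_of_neg
    · nlinarith [sq_nonneg (2 * L + 1)]
    · have : 0 < 2 * r₀ ^ 2 * (L + 1) := by positivity
      nlinarith
  set K : ℝ := A / r₀ * Real.exp (-(c * r₀ ^ 2)) with hK
  have hKpos : 0 < K := mul_pos (div_pos hApos hr0) (Real.exp_pos _)
  have hKE : K * Real.exp (c * r₀ ^ 2) = A / r₀ := by
    rw [hK, mul_assoc, ← Real.exp_add]; simp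
  set C0 : ℝ := (-L - Real.log (-L)) - A / (2 * c * r₀) with hC0
  -- matching at r₀
  have m0 : g C0 K c r₀ = f r₀ := by
    unfold g f
    rw [div_mul_eq_mul_div, hKE, hC0, ← hLdef]
    field_simp [hr0.ne', hcpos.ne']
    ring
  have m1 : G1 K c r₀ = F1 r₀ := by
    unfold G1 F1
    rw [mul_right_comm, hKE, ← hLdef, hA]
    field_simp [hr0.ne', hL0.ne]
    ring
  have m2 : G2 K c r₀ = F2 r₀ := by
    unfold G2 F2
    rw [hKE, ← hLdef, hA, hc]
    field_simp [hr0.ne', hL0.ne, hL1'.ne']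
    ring
  -- the glued function and its first/second derivative candidates
  set u : ℝ → ℝ := fun r => if r < r₀ then g C0 K c r else f r with hu
  set v : ℝ → ℝ := fun r => if r < r₀ then G1 K c r else F1 r with hv
  set w : ℝ → ℝ := fun r => if r < r₀ then G2 K c r else F2 r with hw
  have ult : ∀ r, r < r₀ → u =ᶠ[nhds r] g C0 K c :=
    fun r hr => eventually_of_mem (Iio_mem_nhds hr) (fun x hx => if_pos hx)
  have ugt : ∀ r, r₀ < r → u =ᶠ[nhds r] f :=
    fun r hr => eventually_of_mem (Ioi_mem_nhds hr) (fun x hx => if_neg (not_lt.mpr (le_of_lt hx)))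
  have vlt : ∀ r, r < r₀ → v =ᶠ[nhds r] G1 K c :=
    fun r hr => eventually_of_mem (Iio_mem_nhds hr) (fun x hx => if_pos hx)
  have vgt : ∀ r, r₀ < r → v =ᶠ[nhds r] F1 :=
    fun r hr => eventually_of_mem (Ioi_mem_nhds hr) (fun x hx => if_neg (not_lt.mpr (le_of_lt hx)))
  have ur0 : u r₀ = f r₀ := if_neg (lt_irrefl _)
  have vr0 : v r₀ = F1 r₀ := if_neg (lt_irrefl _)
  have wr0 : w r₀ = F2 r₀ := if_neg (lt_irrefl _)
  -- first derivative
  have hu' : ∀ r, r < (1:ℝ) → HasDerivAt u (v r) r := by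
    intro r hr
    rcases lt_trichotomy r r₀ with h | h | h
    · rw [show v r = G1 K c r from if_pos h]
      exact (hg1 hcpos.ne' r).congr_of_eventuallyEq (ult r h)
    · subst h
      rw [vr0]
      have hle : HasDerivWithinAt u (F1 r) (Iic r) r := by
        refine (m1 ▸ (hg1 hcpos.ne' r).hasDerivWithinAt).congr ?_ (by rw [ur0, m0])
        intro y hy
        rcases eq_or_lt_of_le (mem_Iic.mp hy) with rfl | hy'
        · rw [ur0, m0]
        · exact if_pos hy'
      have hge : HasDerivWithinAt u (F1 r) (Ici r) r := by
        refine ((hf1 hr0 hr).hasDerivWithinAt).congr ?_ ur0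
        intro y hy
        exact if_neg (not_lt.mpr hy)
      have := hle.union hge
      rw [Iic_union_Ici] at this
      exact hasDerivWithinAt_univ.mp this
    · rw [show v r = F1 r from if_neg (not_lt.mpr h.le)]
      exact (hf1 (lt_trans hr0 h) hr).congr_of_eventuallyEq (ugt r h)
  -- second derivative
  have hv' : ∀ r, r < (1:ℝ) → HasDerivAt v (w r) r := by
    intro r hr
    rcases lt_trichotomy r r₀ with h | h | h
    · rw [show w r = G2 K c r from if_pos h]
      exact (hg2 K c r).congr_of_eventuallyEq (vlt r h)
    · subst h
      rw [wr0]
      have hle : HasDerivWithinAt v (F2 r) (Iic r) r := by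
        refine (m2 ▸ (hg2 K c r).hasDerivWithinAt).congr ?_ (by rw [vr0, m1])
        intro y hy
        rcases eq_or_lt_of_le (mem_Iic.mp hy) with rfl | hy'
        · rw [vr0, m1]
        · exact if_pos hy'
      have hge : HasDerivWithinAt v (F2 r) (Ici r) r := by
        refine ((hf2 hr0 hr).hasDerivWithinAt).congr ?_ vr0
        intro y hy
        exact if_neg (not_lt.mpr hy)
      have := hle.union hge
      rw [Iic_union_Ici] at this
      exact hasDerivWithinAt_univ.mp this
    · rw [show w r = F2 r from if_neg (not_lt.mpr h.le)]
      exact (hf2 (lt_trans hr0 h) hr).congr_of_eventuallyEq (vgt r h)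
  have hderiv_u : ∀ r, r < (1:ℝ) → deriv u r = v r := fun r hr => (hu' r hr).deriv
  have hderiv_v : ∀ r, r < (1:ℝ) → deriv v r = w r := fun r hr => (hv' r hr).deriv
  have hdd : ∀ r, r < (1:ℝ) → deriv (deriv u) r = w r := by
    intro r hr
    have he : deriv u =ᶠ[nhds r] v :=
      eventually_of_mem (Iio_mem_nhds hr) (fun x hx => hderiv_u x hx)
    rw [he.deriv_eq, hderiv_v r hr]
  -- continuity of w on Iio 1
  have hwc : ContinuousOn w (Iio (1:ℝ)) := by
    intro r hr
    simp only [mem_Iio] at hr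
    apply ContinuousAt.continuousWithinAt
    rcases lt_trichotomy r r₀ with h | h | h
    · exact ((G2_cont K c).continuousAt).congr
        (eventually_of_mem (Iio_mem_nhds h) (fun x hx => (if_pos hx).symm))
    · subst h
      have hle : ContinuousWithinAt w (Iic r) r := by
        refine ((G2_cont K c).continuousAt.continuousWithinAt).congr ?_ (by rw [wr0, m2])
        intro y hy
        rcases eq_or_lt_of_le (mem_Iic.mp hy) with rfl | hy'
        · rw [wr0, m2]
        · exact if_pos hy'
      have hge : ContinuousWithinAt w (Ici r) r := by
        refine ((F2_contAt hr0 hr).continuousWithinAt).congr ?_ wr0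
        intro y hy
        exact if_neg (not_lt.mpr hy)
      have := hle.union hge
      rw [Iic_union_Ici] at this
      exact (continuousWithinAt_univ w r).mp this
    · refine ((F2_contAt (lt_trans hr0 h) hr).congr ?_)
      exact eventually_of_mem (Ioi_mem_nhds h) (fun x hx => (if_neg (not_lt.mpr (le_of_lt hx))).symm)
  -- assemble
  refine ⟨u, ?_, ?_, ?_, ?_, ?_⟩
  · have main : ContDiffOn ℝ 2 u (Iio (1:ℝ)) := by
      rw [show (2 : WithTop ℕ∞) = 1 + 1 from by norm_num,
        contDiffOn_succ_iff_deriv_of_isOpen isOpen_Iio]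
      refine ⟨fun r hr => (hu' r hr).differentiableAt.differentiableWithinAt, by simp, ?_⟩
      have hcv : ContDiffOn ℝ 1 v (Iio (1:ℝ)) := by
        rw [show (1 : WithTop ℕ∞) = 0 + 1 from by norm_num,
          contDiffOn_succ_iff_deriv_of_isOpen isOpen_Iio]
        refine ⟨fun r hr => (hv' r hr).differentiableAt.differentiableWithinAt, by simp, ?_⟩
        rw [contDiffOn_zero]
        exact hwc.congr (fun r hr => hderiv_v r hr)
      exact hcv.congr (fun r hr => hderiv_u r hr)
    exact main.mono (fun x hx => hx.2)
  · intro r hr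
    exact if_neg (not_lt.mpr hr.1)
  · rw [hderiv_u 0 one_pos, show v 0 = G1 K c 0 from if_pos hr0]
    unfold G1
    ring
  · intro r hr
    rw [hderiv_u r hr.2]
    by_cases h : r < r₀
    · rw [show v r = G1 K c r from if_pos h]
      unfold G1
      have := hr.1
      positivity
    · rw [show v r = F1 r from if_neg h]
      exact F1_pos (lt_of_lt_of_le hre (not_lt.mp h)) hr.2
  · intro r hr
    rw [hdd r hr.2]
    by_cases h : r < r₀
    · rw [show w r = G2 K c r from if_pos h]
      unfold G2
      have h1 : 0 < 1 + 2 * c * r ^ 2 := by positivity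
      positivity
    · rw [show w r = F2 r from if_neg h]
      exact F2_pos hr.1 hr.2
end

section
/- Let u_D(r) = log(2/(1-r²)) and u_{D*}(r) = -log r - log(-log r) on (0,1). There exists A > 0 and δ > 0 such that for all r ∈ (1-δ, 1): (1) 0 < u_{D*}(r) - u_D(r) < A(1-r)²; (2) 1 - A(1-r)² < u_{D*}'(r)/u_D'(r) < 1; (3) 1 < u_{D*}''(r)/u_D''(r) < 1 + A(1-r)². In fact any A > 1/3 works for some δ depending on A. -/
open Real Filter Set Topology

set_option maxHeartbeats 1000000

section Aux

lemma aux_hasDerivAt_uD {r : ℝ} (hr : r ∈ Set.Ioo (0:ℝ) 1) :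
    HasDerivAt (fun x => Real.log (2 / (1 - x ^ 2))) (2 * r / (1 - r ^ 2)) r := by
  obtain ⟨h0, h1⟩ := hr
  have hne : (1 : ℝ) - r ^ 2 ≠ 0 := by nlinarith
  have h : HasDerivAt (fun x : ℝ => 1 - x ^ 2) (-(2 * r)) r := by
    simpa using ((hasDerivAt_pow 2 r).const_sub 1)
  have h2 : HasDerivAt (fun x : ℝ => 2 / (1 - x ^ 2))
      ((0 * (1 - r ^ 2) - 2 * (-(2 * r))) / (1 - r ^ 2) ^ 2) r :=
    (hasDerivAt_const r 2).div h hne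
  have h3 : (2 : ℝ) / (1 - r ^ 2) ≠ 0 := by positivity
  have := h2.log h3
  convert this using 1
  field_simp
  ring

lemma aux_hasDerivAt_f1 {r : ℝ} (hr : r ∈ Set.Ioo (0:ℝ) 1) :
    HasDerivAt (fun x : ℝ => 2 * x / (1 - x ^ 2)) (2 * (1 + r ^ 2) / (1 - r ^ 2) ^ 2) r := by
  obtain ⟨h0, h1⟩ := hr
  have hne : (1 : ℝ) - r ^ 2 ≠ 0 := by nlinarith
  have hnum : HasDerivAt (fun x : ℝ => 2 * x) 2 r := by
    simpa using (hasDerivAt_id r).const_mul (2:ℝ)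
  have hden : HasDerivAt (fun x : ℝ => 1 - x ^ 2) (-(2 * r)) r := by
    simpa using ((hasDerivAt_pow 2 r).const_sub 1)
  have := hnum.div hden hne
  refine this.congr_deriv ?_
  ring

lemma aux_hasDerivAt_uDstar {r : ℝ} (hr : r ∈ Set.Ioo (0:ℝ) 1) :
    HasDerivAt (fun x => -Real.log x - Real.log (-Real.log x))
      (-(1 / r) - 1 / (r * Real.log r)) r := by
  obtain ⟨h0, h1⟩ := hr
  have hlog : Real.log r < 0 := Real.log_neg h0 h1
  have hlogne : Real.log r ≠ 0 := ne_of_lt hlog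
  have h2 : HasDerivAt (fun x : ℝ => -Real.log x) (-r⁻¹) r :=
    (Real.hasDerivAt_log (ne_of_gt h0)).neg
  have h3 : HasDerivAt (fun x : ℝ => Real.log (-Real.log x)) (-r⁻¹ / -Real.log r) r :=
    h2.log (by simpa using hlogne)
  have := h2.sub h3
  refine this.congr_deriv ?_
  field_simp

lemma aux_hasDerivAt_g1 {r : ℝ} (hr : r ∈ Set.Ioo (0:ℝ) 1) :
    HasDerivAt (fun x : ℝ => -(1 / x) - 1 / (x * Real.log x))
      (1 / r ^ 2 + (Real.log r + 1) / (r * Real.log r) ^ 2) r := by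
  obtain ⟨h0, h1⟩ := hr
  have hr0 : r ≠ 0 := ne_of_gt h0
  have hlogne : Real.log r ≠ 0 := ne_of_lt (Real.log_neg h0 h1)
  have d1 : HasDerivAt (fun x : ℝ => -(1 / x)) (1 / r ^ 2) r := by
    have := (hasDerivAt_inv hr0).neg
    simpa [one_div, Pi.neg_def] using this
  have d2 : HasDerivAt (fun x : ℝ => x * Real.log x) (1 * Real.log r + r * r⁻¹) r :=
    (hasDerivAt_id r).mul (Real.hasDerivAt_log hr0)
  have d3 : HasDerivAt (fun x : ℝ => 1 / (x * Real.log x))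
      (-(1 * Real.log r + r * r⁻¹) / (r * Real.log r) ^ 2) r := by
    have := d2.inv (mul_ne_zero hr0 hlogne)
    simpa [one_div, Pi.inv_def] using this
  have := d1.sub d3
  refine this.congr_deriv ?_
  field_simp
  ring

lemma aux_deriv_uD {uD : ℝ → ℝ}
    (huD : ∀ r ∈ Set.Ioo (0:ℝ) 1, uD r = Real.log (2 / (1 - r ^ 2)))
    {r : ℝ} (hr : r ∈ Set.Ioo (0:ℝ) 1) :
    deriv uD r = 2 * r / (1 - r ^ 2) := by
  have heq : uD =ᶠ[nhds r] (fun x => Real.log (2 / (1 - x ^ 2))) :=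
    eventually_of_mem (isOpen_Ioo.mem_nhds hr) huD
  rw [heq.deriv_eq, (aux_hasDerivAt_uD hr).deriv]

lemma aux_deriv2_uD {uD : ℝ → ℝ}
    (huD : ∀ r ∈ Set.Ioo (0:ℝ) 1, uD r = Real.log (2 / (1 - r ^ 2)))
    {r : ℝ} (hr : r ∈ Set.Ioo (0:ℝ) 1) :
    deriv (deriv uD) r = 2 * (1 + r ^ 2) / (1 - r ^ 2) ^ 2 := by
  have heq : deriv uD =ᶠ[nhds r] (fun x : ℝ => 2 * x / (1 - x ^ 2)) :=
    eventually_of_mem (isOpen_Ioo.mem_nhds hr) (fun x hx => aux_deriv_uD huD hx)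
  rw [heq.deriv_eq, (aux_hasDerivAt_f1 hr).deriv]

lemma aux_deriv_uDstar {uDstar : ℝ → ℝ}
    (h : ∀ r ∈ Set.Ioo (0:ℝ) 1, uDstar r = -Real.log r - Real.log (-Real.log r))
    {r : ℝ} (hr : r ∈ Set.Ioo (0:ℝ) 1) :
    deriv uDstar r = -(1 / r) - 1 / (r * Real.log r) := by
  have heq : uDstar =ᶠ[nhds r] (fun x => -Real.log x - Real.log (-Real.log x)) :=
    eventually_of_mem (isOpen_Ioo.mem_nhds hr) h
  rw [heq.deriv_eq, (aux_hasDerivAt_uDstar hr).deriv]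

lemma aux_deriv2_uDstar {uDstar : ℝ → ℝ}
    (h : ∀ r ∈ Set.Ioo (0:ℝ) 1, uDstar r = -Real.log r - Real.log (-Real.log r))
    {r : ℝ} (hr : r ∈ Set.Ioo (0:ℝ) 1) :
    deriv (deriv uDstar) r = 1 / r ^ 2 + (Real.log r + 1) / (r * Real.log r) ^ 2 := by
  have heq : deriv uDstar =ᶠ[nhds r] (fun x : ℝ => -(1 / x) - 1 / (x * Real.log x)) :=
    eventually_of_mem (isOpen_Ioo.mem_nhds hr) (fun x hx => aux_deriv_uDstar h hx)
  rw [heq.deriv_eq, (aux_hasDerivAt_g1 hr).deriv]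

lemma aux_ident1 (r t s w : ℝ) (hrt : t = 1 - r) (hs : s = t + t^2/2 + w*t^3)
    (hr0 : r ≠ 0) (ht0 : t ≠ 0) (hs0 : s ≠ 0) (h1r : 1 - r^2 ≠ 0) :
    (1 - (-(1/r) - 1/(r * (-s))) / (2*r/(1-r^2))) / t^2
      = (2*w + (1/2 - 2*w)*t + w*t^2) / (2*r^2*(1 + t/2 + w*t^2)) := by
  have step1 : (1 - (-(1/r) - 1/(r * (-s))) / (2*r/(1-r^2))) / t^2
      = (2*r^2*s - (1-s)*(1-r^2)) / (t^3 * (2*r^2*(1 + t/2 + w*t^2))) := by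
    have hden : t^3 * (2*r^2*(1 + t/2 + w*t^2)) = 2*r^2*s*t^2 := by
      subst hs; ring
    rw [hden]
    field_simp
    ring
  rw [step1]
  have hnum : 2*r^2*s - (1-s)*(1-r^2) = t^3*(2*w + (1/2 - 2*w)*t + w*t^2) := by
    subst hs hrt; ring
  rw [hnum, mul_div_mul_left _ _ (pow_ne_zero 3 ht0)]

lemma aux_ident2 (r t s w : ℝ) (hrt : t = 1 - r) (hs : s = t + t^2/2 + w*t^3)
    (hr0 : r ≠ 0) (ht0 : t ≠ 0) (hs0 : s ≠ 0) (h1r : 1 - r^2 ≠ 0)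
    (h1r2 : 1 + r^2 ≠ 0) :
    ((1/r^2 + (-s + 1)/(r * (-s))^2) / (2*(1+r^2)/(1-r^2)^2) - 1) / t^2
      = (4 - 8*w + (16*w - 2)*t + (-4*w - 4*w^2)*t^2 + (12*w^2 - 3*w)*t^3
          + (2*w - 10*w^2 - 1/4)*t^4 + (4*w^2 - w)*t^5 - w^2*t^6)
        / (2*(1+r^2)*r^2*(1 + t/2 + w*t^2)^2) := by
  have step1 : ((1/r^2 + (-s + 1)/(r * (-s))^2) / (2*(1+r^2)/(1-r^2)^2) - 1) / t^2
      = ((s^2 + 1 - s)*(1-r^2)^2 - 2*(1+r^2)*r^2*s^2)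
          / (t^4 * (2*(1+r^2)*r^2*(1 + t/2 + w*t^2)^2)) := by
    have hden : t^4 * (2*(1+r^2)*r^2*(1 + t/2 + w*t^2)^2) = 2*(1+r^2)*r^2*s^2*t^2 := by
      subst hs; ring
    rw [hden]
    field_simp
    ring
  rw [step1]
  have hnum : (s^2 + 1 - s)*(1-r^2)^2 - 2*(1+r^2)*r^2*s^2
      = t^4*(4 - 8*w + (16*w - 2)*t + (-4*w - 4*w^2)*t^2 + (12*w^2 - 3*w)*t^3
          + (2*w - 10*w^2 - 1/4)*t^4 + (4*w^2 - w)*t^5 - w^2*t^6) := by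
    subst hs hrt; ring
  rw [hnum, mul_div_mul_left _ _ (pow_ne_zero 4 ht0)]

lemma aux_ident0 (t s w y : ℝ) (hs : s = t + t^2/2 + w*t^3)
    (hy : y = 2*t*(1+w*t)/(2-t)) (ht0 : t ≠ 0) (h2t : (2:ℝ) - t ≠ 0) :
    (s - y + y^2/2) / t^2
      = ((2 - 4*w) + (10*w - 1)*t + (1/2 - 4*w + 2*w^2)*t^2 + w*t^3) / (2-t)^2 := by
  subst hs hy
  field_simp
  ring

lemma aux_mem : ∀ᶠ r in 𝓝[<] (1:ℝ), r ∈ Set.Ioo (1/2 : ℝ) 1 :=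
  eventually_of_mem (Ioo_mem_nhdsLT (by norm_num)) (fun _ hx => hx)

lemma aux_tendsto_t : Filter.Tendsto (fun r : ℝ => 1 - r) (𝓝[<] 1) (𝓝 0) := by
  have h : Filter.Tendsto (fun r : ℝ => 1 - r) (𝓝 1) (𝓝 (1 - 1)) :=
    tendsto_const_nhds.sub tendsto_id
  simpa using h.mono_left nhdsWithin_le_nhds

lemma aux_tendsto_w :
    Filter.Tendsto (fun r : ℝ => (-Real.log r - (1 - r) - (1 - r)^2/2)/(1 - r)^3)
      (𝓝[<] (1:ℝ)) (𝓝 (1/3)) := by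
  have key : Filter.Tendsto
      (fun r : ℝ => (-Real.log r - (1 - r) - (1 - r)^2/2)/(1 - r)^3 - 1/3)
      (𝓝[<] (1:ℝ)) (𝓝 0) := by
    apply squeeze_zero_norm' (a := fun r : ℝ => 2 * (1 - r))
    · filter_upwards [aux_mem] with r hr
      obtain ⟨h2, h1⟩ := hr
      set t := 1 - r with htdef
      have ht0 : 0 < t := by simp [htdef]; linarith
      have ht2 : t < 1/2 := by simp [htdef]; linarith
      have habs : |t| < 1 := by rw [abs_of_pos ht0]; linarith
      have hsum := Real.abs_log_sub_add_sum_range_le habs 3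
      norm_num [Finset.sum_range_succ] at hsum
      rw [abs_of_pos ht0] at hsum
      have hlog : Real.log (1 - t) = Real.log r := by rw [htdef]; ring_nf
      rw [hlog] at hsum
      have hbound : t^4/(1-t) ≤ 2*t^4 := by
        rw [div_le_iff₀ (by linarith : (0:ℝ) < 1 - t)]
        nlinarith [pow_pos ht0 4]
      have heq : (-Real.log r - t - t^2/2)/t^3 - 1/3
          = -((t + t^2/2 + t^3/3 + Real.log r)/t^3) := by
        field_simp
        ring
      rw [Real.norm_eq_abs, heq, abs_neg, abs_div, abs_of_pos (pow_pos ht0 3)]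
      rw [div_le_iff₀ (pow_pos ht0 3)]
      calc |t + t^2/2 + t^3/3 + Real.log r| ≤ t^4/(1-t) := hsum
        _ ≤ 2*t^4 := hbound
        _ = 2*t*t^3 := by ring
    · have := aux_tendsto_t.const_mul (2:ℝ)
      simpa using this
  have := key.add (tendsto_const_nhds (x := (1/3 : ℝ)))
  simpa using this

lemma aux_lim1 {W : ℝ → ℝ} (hW : Filter.Tendsto W (𝓝[<] (1:ℝ)) (𝓝 (1/3))) :
    Filter.Tendsto (fun r : ℝ => (2*W r + (1/2 - 2*W r)*(1-r) + W r*(1-r)^2)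
      / (2*r^2*(1 + (1-r)/2 + W r*(1-r)^2))) (𝓝[<] (1:ℝ)) (𝓝 (1/3)) := by
  have hr : Filter.Tendsto (fun r : ℝ => r) (𝓝[<] (1:ℝ)) (𝓝 1) :=
    tendsto_id.mono_left nhdsWithin_le_nhds
  have hp : Filter.Tendsto (fun r : ℝ => ((r : ℝ), W r)) (𝓝[<] (1:ℝ)) (𝓝 (1, 1/3)) :=
    hr.prodMk_nhds hW
  have hc : ContinuousAt (fun p : ℝ × ℝ => (2*p.2 + (1/2 - 2*p.2)*(1-p.1) + p.2*(1-p.1)^2)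
      / (2*p.1^2*(1 + (1-p.1)/2 + p.2*(1-p.1)^2))) (1, 1/3) := by
    apply ContinuousAt.div
    · fun_prop
    · fun_prop
    · norm_num
  have h := hc.tendsto.comp hp
  norm_num only at h
  exact h.congr (fun r => rfl)

lemma aux_lim2 {W : ℝ → ℝ} (hW : Filter.Tendsto W (𝓝[<] (1:ℝ)) (𝓝 (1/3))) :
    Filter.Tendsto (fun r : ℝ =>
      (4 - 8*W r + (16*W r - 2)*(1-r) + (-4*W r - 4*(W r)^2)*(1-r)^2
        + (12*(W r)^2 - 3*W r)*(1-r)^3 + (2*W r - 10*(W r)^2 - 1/4)*(1-r)^4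
        + (4*(W r)^2 - W r)*(1-r)^5 - (W r)^2*(1-r)^6)
      / (2*(1+r^2)*r^2*(1 + (1-r)/2 + W r*(1-r)^2)^2)) (𝓝[<] (1:ℝ)) (𝓝 (1/3)) := by
  have hr : Filter.Tendsto (fun r : ℝ => r) (𝓝[<] (1:ℝ)) (𝓝 1) :=
    tendsto_id.mono_left nhdsWithin_le_nhds
  have hp : Filter.Tendsto (fun r : ℝ => ((r : ℝ), W r)) (𝓝[<] (1:ℝ)) (𝓝 (1, 1/3)) :=
    hr.prodMk_nhds hW
  have hc : ContinuousAt (fun p : ℝ × ℝ =>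
      (4 - 8*p.2 + (16*p.2 - 2)*(1-p.1) + (-4*p.2 - 4*p.2^2)*(1-p.1)^2
        + (12*p.2^2 - 3*p.2)*(1-p.1)^3 + (2*p.2 - 10*p.2^2 - 1/4)*(1-p.1)^4
        + (4*p.2^2 - p.2)*(1-p.1)^5 - p.2^2*(1-p.1)^6)
      / (2*(1+p.1^2)*p.1^2*(1 + (1-p.1)/2 + p.2*(1-p.1)^2)^2)) (1, 1/3) := by
    apply ContinuousAt.div
    · fun_prop
    · fun_prop
    · norm_num
  have h := hc.tendsto.comp hp
  norm_num only at h
  exact h.congr (fun r => rfl)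

lemma aux_lim0 {W : ℝ → ℝ} (hW : Filter.Tendsto W (𝓝[<] (1:ℝ)) (𝓝 (1/3))) :
    Filter.Tendsto (fun r : ℝ =>
      ((2 - 4*W r) + (10*W r - 1)*(1-r) + (1/2 - 4*W r + 2*(W r)^2)*(1-r)^2 + W r*(1-r)^3)
        / (2-(1-r))^2) (𝓝[<] (1:ℝ)) (𝓝 (1/6)) := by
  have hr : Filter.Tendsto (fun r : ℝ => r) (𝓝[<] (1:ℝ)) (𝓝 1) :=
    tendsto_id.mono_left nhdsWithin_le_nhds
  have hp : Filter.Tendsto (fun r : ℝ => ((r : ℝ), W r)) (𝓝[<] (1:ℝ)) (𝓝 (1, 1/3)) :=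
    hr.prodMk_nhds hW
  have hc : ContinuousAt (fun p : ℝ × ℝ =>
      ((2 - 4*p.2) + (10*p.2 - 1)*(1-p.1) + (1/2 - 4*p.2 + 2*p.2^2)*(1-p.1)^2 + p.2*(1-p.1)^3)
        / (2-(1-p.1))^2) (1, 1/3) := by
    apply ContinuousAt.div
    · fun_prop
    · fun_prop
    · norm_num
  have h := hc.tendsto.comp hp
  norm_num only at h
  exact h.congr (fun r => rfl)

end Aux
/-- Comparison of the log-densities `u_D(r) = log(2/(1-r²))` and
`u_{D*}(r) = -log r - log(-log r)` and of their first and second derivatives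
near `r = 1`: any `A > 1/3` works for a suitable `δ > 0`. -/
theorem stmt_12 (uD uDstar : ℝ → ℝ)
    (huD : ∀ r ∈ Set.Ioo (0:ℝ) 1, uD r = Real.log (2 / (1 - r ^ 2)))
    (huDstar : ∀ r ∈ Set.Ioo (0:ℝ) 1,
      uDstar r = -Real.log r - Real.log (-Real.log r)) :
    ∀ A > (1/3 : ℝ), ∃ δ > (0:ℝ), ∀ r ∈ Set.Ioo (1 - δ) (1:ℝ),
      (0 < uDstar r - uD r ∧ uDstar r - uD r < A * (1 - r) ^ 2) ∧
      (1 - A * (1 - r) ^ 2 < deriv uDstar r / deriv uD r ∧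
        deriv uDstar r / deriv uD r < 1) ∧
      (1 < deriv (deriv uDstar) r / deriv (deriv uD) r ∧
        deriv (deriv uDstar) r / deriv (deriv uD) r < 1 + A * (1 - r) ^ 2) := by
  intro A hA
  have hA6 : (1:ℝ)/6 < A := by linarith
  set W : ℝ → ℝ := fun r => (-Real.log r - (1 - r) - (1 - r)^2/2)/(1 - r)^3 with hWdef
  set Y : ℝ → ℝ := fun r => 2*(1-r)*(1 + W r*(1-r))/(2-(1-r)) with hYdef
  have hw : Filter.Tendsto W (𝓝[<] (1:ℝ)) (𝓝 (1/3)) := aux_tendsto_w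
  -- basic facts for r ∈ (1/2, 1)
  have basics : ∀ r ∈ Set.Ioo (1/2 : ℝ) 1, 0 < r ∧ r < 1 ∧ (1:ℝ) - r ≠ 0 ∧
      0 < -Real.log r ∧ 1 - r^2 ≠ 0 ∧
      -Real.log r = (1-r) + (1-r)^2/2 + W r*(1-r)^3 := by
    intro r hr
    obtain ⟨hhalf, hlt1⟩ := hr
    have hr0 : (0:ℝ) < r := by linarith
    have hlneg : Real.log r < 0 := Real.log_neg hr0 hlt1
    have ht0 : (1:ℝ) - r ≠ 0 := ne_of_gt (by linarith)
    refine ⟨hr0, hlt1, ht0, by linarith, by nlinarith, ?_⟩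
    simp only [hWdef]
    field_simp
    ring
  -- eventual identity for Φ₁
  have heq1 : ∀ᶠ r in 𝓝[<] (1:ℝ),
      (1 - deriv uDstar r / deriv uD r)/(1-r)^2
        = (2*W r + (1/2 - 2*W r)*(1-r) + W r*(1-r)^2)
            / (2*r^2*(1 + (1-r)/2 + W r*(1-r)^2)) := by
    filter_upwards [aux_mem] with r hr
    obtain ⟨hr0, hlt1, ht0, hs, h1r, hsw⟩ := basics r hr
    have hrI : r ∈ Set.Ioo (0:ℝ) 1 := ⟨hr0, hlt1⟩
    have hid := aux_ident1 r (1-r) (-Real.log r) (W r) rfl hsw (ne_of_gt hr0) ht0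
      (ne_of_gt hs) h1r
    rw [aux_deriv_uD huD hrI, aux_deriv_uDstar huDstar hrI]
    simp only [neg_neg] at hid
    exact hid
  have hphi1 : Filter.Tendsto (fun r => (1 - deriv uDstar r / deriv uD r)/(1-r)^2)
      (𝓝[<] (1:ℝ)) (𝓝 (1/3)) := Filter.Tendsto.congr' (heq1.mono fun r h => h.symm) (aux_lim1 hw)
  -- eventual identity for Φ₂
  have heq2 : ∀ᶠ r in 𝓝[<] (1:ℝ),
      (deriv (deriv uDstar) r / deriv (deriv uD) r - 1)/(1-r)^2
        = (4 - 8*W r + (16*W r - 2)*(1-r) + (-4*W r - 4*(W r)^2)*(1-r)^2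
            + (12*(W r)^2 - 3*W r)*(1-r)^3 + (2*W r - 10*(W r)^2 - 1/4)*(1-r)^4
            + (4*(W r)^2 - W r)*(1-r)^5 - (W r)^2*(1-r)^6)
          / (2*(1+r^2)*r^2*(1 + (1-r)/2 + W r*(1-r)^2)^2) := by
    filter_upwards [aux_mem] with r hr
    obtain ⟨hr0, hlt1, ht0, hs, h1r, hsw⟩ := basics r hr
    have hrI : r ∈ Set.Ioo (0:ℝ) 1 := ⟨hr0, hlt1⟩
    have hid := aux_ident2 r (1-r) (-Real.log r) (W r) rfl hsw (ne_of_gt hr0) ht0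
      (ne_of_gt hs) h1r (by positivity)
    rw [aux_deriv2_uD huD hrI, aux_deriv2_uDstar huDstar hrI]
    simp only [neg_neg] at hid
    exact hid
  have hphi2 : Filter.Tendsto (fun r => (deriv (deriv uDstar) r / deriv (deriv uD) r - 1)/(1-r)^2)
      (𝓝[<] (1:ℝ)) (𝓝 (1/3)) := Filter.Tendsto.congr' (heq2.mono fun r h => h.symm) (aux_lim2 hw)
  -- error term for Φ₀
  have herr : Filter.Tendsto
      (fun r => (Real.log (2*(-Real.log r)/(1-r^2)) - Y r + (Y r)^2/2)/(1-r)^2)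
      (𝓝[<] (1:ℝ)) (𝓝 0) := by
    have hts : ∀ᶠ r in 𝓝[<] (1:ℝ), (1:ℝ) - r < 1/10 :=
      aux_tendsto_t.eventually_lt_const (by norm_num)
    have hWlt : ∀ᶠ r in 𝓝[<] (1:ℝ), W r < 1 := hw.eventually_lt_const (by norm_num)
    have hWgt : ∀ᶠ r in 𝓝[<] (1:ℝ), 0 < W r := hw.eventually_const_lt (by norm_num)
    apply squeeze_zero_norm' (a := fun r : ℝ => 128 * (1 - r))
    · filter_upwards [aux_mem, hts, hWlt, hWgt] with r hr hts hWlt hWgt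
      obtain ⟨hr0, hlt1, ht0, hs, h1r, hsw⟩ := basics r hr
      have htpos : (0:ℝ) < 1 - r := lt_of_le_of_ne (by linarith [hr.2]) (Ne.symm ht0)
      have h2t : (0:ℝ) < 2 - (1-r) := by linarith
      have h1r' : (0:ℝ) < 1 - r^2 := by nlinarith [hr.1, hr.2]
      -- bounds on Y
      have hYpos : 0 < Y r := by
        simp only [hYdef]
        apply div_pos _ h2t
        have : 0 < 1 + W r * (1-r) := by positivity
        positivity
      have hYle : Y r ≤ 4*(1-r) := by
        simp only [hYdef]
        rw [div_le_iff₀ h2t]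
        nlinarith
      have habsY : |Y r| < 1 := by
        rw [abs_of_pos hYpos]; linarith
      have hQY : 2*(-Real.log r)/(1-r^2) = 1 + Y r := by
        simp only [hYdef]
        rw [hsw]
        field_simp
        ring
      -- log estimate
      have hlemma := Real.abs_log_sub_add_sum_range_le (x := -(Y r)) (by rwa [abs_neg]) 2
      have hsum2 : (∑ i ∈ Finset.range 2, (-(Y r)) ^ (i + 1) / ((i:ℝ) + 1))
          = -(Y r) + (Y r)^2/2 := by
        norm_num [Finset.sum_range_succ]
      rw [hsum2, sub_neg_eq_add, abs_neg] at hlemma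
      -- hlemma : |(-(Y r) + (Y r)^2/2) + Real.log (1 + Y r)| ≤ |Y r|^3/(1-|Y r|)
      have hYabs : |Y r| = Y r := abs_of_pos hYpos
      have h3 : |Y r|^3 ≤ 64*(1-r)^3 := by
        rw [hYabs]
        calc Y r ^ 3 ≤ (4*(1-r))^3 := pow_le_pow_left₀ (le_of_lt hYpos) hYle 3
          _ = 64*(1-r)^3 := by ring
      have h4 : (1:ℝ)/2 ≤ 1 - |Y r| := by
        rw [hYabs]; linarith
      have hb : |Y r|^3/(1 - |Y r|) ≤ 64*(1-r)^3/(1/2) :=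
        div_le_div₀ (by positivity) h3 (by norm_num) h4
      have hb2 : |Y r|^3/(1 - |Y r|) ≤ 128*(1-r)^3 := by
        calc |Y r|^3/(1 - |Y r|) ≤ 64*(1-r)^3/(1/2) := hb
          _ = 128*(1-r)^3 := by ring
      rw [Real.norm_eq_abs, hQY, abs_div, abs_of_pos (pow_pos htpos 2),
        div_le_iff₀ (pow_pos htpos 2)]
      have hargeq : Real.log (1 + Y r) - Y r + (Y r)^2/2
          = (-(Y r) + (Y r)^2/2) + Real.log (1 + Y r) := by ring
      rw [hargeq]
      calc |(-(Y r) + (Y r)^2/2) + Real.log (1 + Y r)|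
          ≤ |Y r|^3/(1 - |Y r|) := hlemma
        _ ≤ 128*(1-r)^3 := hb2
        _ = 128*(1-r)*(1-r)^2 := by ring
    · have := aux_tendsto_t.const_mul (128:ℝ)
      simpa using this
  -- eventual identity for Φ₀
  have heq0 : ∀ᶠ r in 𝓝[<] (1:ℝ),
      (uDstar r - uD r)/(1-r)^2
        = ((2 - 4*W r) + (10*W r - 1)*(1-r) + (1/2 - 4*W r + 2*(W r)^2)*(1-r)^2
            + W r*(1-r)^3)/(2-(1-r))^2
          - (Real.log (2*(-Real.log r)/(1-r^2)) - Y r + (Y r)^2/2)/(1-r)^2 := by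
    filter_upwards [aux_mem] with r hr
    obtain ⟨hr0, hlt1, ht0, hs, h1r, hsw⟩ := basics r hr
    have hrI : r ∈ Set.Ioo (0:ℝ) 1 := ⟨hr0, hlt1⟩
    have htpos : (0:ℝ) < 1 - r := lt_of_le_of_ne (by linarith [hr.2]) (Ne.symm ht0)
    have h2t : ((2:ℝ) - (1-r)) ≠ 0 := by intro h; nlinarith
    have h1r' : (0:ℝ) < 1 - r^2 := by nlinarith [hr.1, hr.2]
    have hlog2 : uDstar r - uD r
        = -Real.log r - Real.log (2*(-Real.log r)/(1-r^2)) := by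
      rw [huDstar r hrI, huD r hrI,
        Real.log_div (show (2:ℝ) ≠ 0 by norm_num) (ne_of_gt h1r'),
        Real.log_div (show 2*(-Real.log r) ≠ 0 by positivity) (ne_of_gt h1r'),
        Real.log_mul (show (2:ℝ) ≠ 0 by norm_num) (ne_of_gt hs)]
      ring
    rw [hlog2]
    have hid := aux_ident0 (1-r) (-Real.log r) (W r) (Y r) hsw (by simp only [hYdef])
      ht0 h2t
    have hsplit : (-Real.log r - Real.log (2*(-Real.log r)/(1-r^2)))/(1-r)^2
        = (-Real.log r - Y r + (Y r)^2/2)/(1-r)^2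
          - (Real.log (2*(-Real.log r)/(1-r^2)) - Y r + (Y r)^2/2)/(1-r)^2 := by
      ring
    rw [hsplit, hid]
  have hphi0 : Filter.Tendsto (fun r => (uDstar r - uD r)/(1-r)^2)
      (𝓝[<] (1:ℝ)) (𝓝 (1/6)) := by
    have := (aux_lim0 hw).sub herr
    rw [sub_zero] at this
    exact Filter.Tendsto.congr' (heq0.mono fun r h => h.symm) this
  -- eventual inequalities
  have e0a : ∀ᶠ r in 𝓝[<] (1:ℝ), 0 < (uDstar r - uD r)/(1-r)^2 :=
    hphi0.eventually_const_lt (by norm_num)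
  have e0b : ∀ᶠ r in 𝓝[<] (1:ℝ), (uDstar r - uD r)/(1-r)^2 < A :=
    hphi0.eventually_lt_const hA6
  have e1a : ∀ᶠ r in 𝓝[<] (1:ℝ), 0 < (1 - deriv uDstar r / deriv uD r)/(1-r)^2 :=
    hphi1.eventually_const_lt (by norm_num)
  have e1b : ∀ᶠ r in 𝓝[<] (1:ℝ), (1 - deriv uDstar r / deriv uD r)/(1-r)^2 < A :=
    hphi1.eventually_lt_const hA
  have e2a : ∀ᶠ r in 𝓝[<] (1:ℝ),
      0 < (deriv (deriv uDstar) r / deriv (deriv uD) r - 1)/(1-r)^2 :=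
    hphi2.eventually_const_lt (by norm_num)
  have e2b : ∀ᶠ r in 𝓝[<] (1:ℝ),
      (deriv (deriv uDstar) r / deriv (deriv uD) r - 1)/(1-r)^2 < A :=
    hphi2.eventually_lt_const hA
  have key : ∀ᶠ r in 𝓝[<] (1:ℝ),
      (0 < uDstar r - uD r ∧ uDstar r - uD r < A * (1 - r) ^ 2) ∧
      (1 - A * (1 - r) ^ 2 < deriv uDstar r / deriv uD r ∧
        deriv uDstar r / deriv uD r < 1) ∧
      (1 < deriv (deriv uDstar) r / deriv (deriv uD) r ∧
        deriv (deriv uDstar) r / deriv (deriv uD) r < 1 + A * (1 - r) ^ 2) := by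
    filter_upwards [aux_mem, e0a, e0b, e1a, e1b, e2a, e2b]
      with r hr e0a e0b e1a e1b e2a e2b
    have htpos : (0:ℝ) < 1 - r := by
      have := hr.2; linarith
    have ht2 : (0:ℝ) < (1-r)^2 := pow_pos htpos 2
    have k0a := (lt_div_iff₀ ht2).mp e0a
    have k0b := (div_lt_iff₀ ht2).mp e0b
    have k1a := (lt_div_iff₀ ht2).mp e1a
    have k1b := (div_lt_iff₀ ht2).mp e1b
    have k2a := (lt_div_iff₀ ht2).mp e2a
    have k2b := (div_lt_iff₀ ht2).mp e2b
    refine ⟨⟨by linarith, by linarith⟩, ⟨by linarith, by linarith⟩,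
      ⟨by linarith, by linarith⟩⟩
  rw [Filter.eventually_iff] at key
  obtain ⟨l, hl, hsub⟩ := mem_nhdsLT_iff_exists_Ioo_subset.mp key
  refine ⟨1 - l, by simp only [Set.mem_Iio] at hl; linarith, ?_⟩
  intro r hr
  apply hsub
  obtain ⟨hr1, hr2⟩ := hr
  exact ⟨by linarith, hr2⟩
end

section
/- Let u_D'(r) = 2r/(1-r²) and u_{D*}'(r) = -(1 + log r)/(r log r). Then u_{D*}'(r)/u_D'(r) < 1 for all r ∈ (1/e, 1), i.e., u_{D*}'(r) < u_D'(r) on that interval. -/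
/-!
Writing `L = log r`, both denominators `-r L` and `1 - r²` are positive on `(0, 1)`, and
cross-multiplying turns the inequality into `L (1 + r²) < r² - 1`. With `y = r²` this is the
classical bound `log y < 2 (y - 1) / (y + 1)` for `0 < y < 1`, the lower bound
`2x / (x + 2) < log (1 + x)` applied to `1 + x = 1 / y`.
-/

open Real

lemma Real.log_lt_two_mul_sub_one_div_add_one {y : ℝ} (hy0 : 0 < y) (hy1 : y < 1) :
    log y < 2 * (y - 1) / (y + 1) := by
  have hx : 0 < y⁻¹ - 1 := sub_pos.2 (one_lt_inv₀ hy0 |>.2 hy1)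
  have h := lt_log_one_add_of_pos hx
  rw [add_sub_cancel, log_inv] at h
  have hbound : 2 * (y⁻¹ - 1) / (y⁻¹ - 1 + 2) = -(2 * (y - 1) / (y + 1)) := by
    rw [show y⁻¹ - 1 + 2 = (y + 1) / y by field_simp; ring, div_div_eq_mul_div]
    field_simp
    ring
  linarith

lemma Real.log_lt_sq_sub_one_div_sq_add_one {r : ℝ} (hr0 : 0 < r) (hr1 : r < 1) :
    log r < (r ^ 2 - 1) / (r ^ 2 + 1) := by
  have h := log_lt_two_mul_sub_one_div_add_one (pow_pos hr0 2) (pow_lt_one₀ hr0.le hr1 two_ne_zero)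
  rw [log_pow, Nat.cast_ofNat, mul_div_assoc] at h
  linarith

lemma Real.neg_one_add_log_div_mul_log_lt {r : ℝ} (hr0 : 0 < r) (hr1 : r < 1) :
    -(1 + log r) / (r * log r) < 2 * r / (1 - r ^ 2) := by
  have hlog : log r < 0 := log_neg hr0 hr1
  have hden : 0 < -(r * log r) := neg_pos.2 (mul_neg_of_pos_of_neg hr0 hlog)
  have hsq : 0 < 1 - r ^ 2 := by nlinarith
  have hkey : log r * (r ^ 2 + 1) < r ^ 2 - 1 :=
    (lt_div_iff₀ (by positivity)).1 (log_lt_sq_sub_one_div_sq_add_one hr0 hr1)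
  rw [← neg_div_neg_eq, neg_neg, div_lt_div_iff₀ hden hsq]
  nlinarith

/-- For `r ∈ (1/e, 1)`, the ratio `u_{D*}'(r)/u_D'(r)` is `< 1`, i.e.
`-(1 + log r)/(r log r) < 2r/(1 - r²)`. -/
theorem stmt_14 : ∀ r ∈ Set.Ioo (Real.exp (-1)) (1:ℝ),
    -(1 + Real.log r) / (r * Real.log r) / (2 * r / (1 - r ^ 2)) < 1 ∧
    -(1 + Real.log r) / (r * Real.log r) < 2 * r / (1 - r ^ 2) := by
  rintro r ⟨hre, hr1⟩
  have hr0 : 0 < r := (exp_pos _).trans hre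
  have hlt := neg_one_add_log_div_mul_log_lt hr0 hr1
  have hrhs : 0 < 2 * r / (1 - r ^ 2) := div_pos (by positivity) (by nlinarith)
  exact ⟨(div_lt_one hrhs).2 hlt, hlt⟩
end

section
/- Let ε > 0 be small and A > 1/3. Define r_ε = 1 - √(ε/A), and suppose u_ε : (0,1) → ℝ is C², equals u_{D*} on [r_ε, 1), and satisfies 0 < u_ε - u_D < ε, 1 - ε < u_ε'/u_D' < 1, and 1 < u_ε''/u_D'' < 1 + ε on (0,1). Then the metric ds_ε = e^{u_{ε/4}(r)}|dz| has Gaussian curvature satisfying -(1+ε) < κ(ds_ε) < -1/(1+ε) for all sufficiently small ε. Specifically, for each point, the ratio κ(ds_ε)/κ(ds_D) = [(u_{ε/4}'' + u_{ε/4}'/r)/(u_D'' + u_D'/r)]·e^{-2(u_{ε/4}-u_D)} lies strictly between (1-ε/4)e^{-ε/2} > 1/(1+ε) and 1 + ε/4 < 1 + ε. -/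
/-!
The metric `e^{u_D}|dz|` has curvature `-1`, i.e. `Δu_D = u_D'' + u_D'/r = e^{2u_D}`. Hence
`κ(ds_ε) = -(Δu_{ε/4}/Δu_D) · e^{-2(u_{ε/4} - u_D)}`. Since `u_D'` and `u_D''` are positive, the
ratio bounds on the first and second derivatives give `1 - ε/4 < Δu_{ε/4}/Δu_D < 1 + ε/4`, and
`0 < u_{ε/4} - u_D < ε/4` puts the exponential factor in `(e^{-ε/2}, 1)`. Finally
`(1 - ε/4) e^{-ε/2} ≥ 1/(1 + ε)` for `ε < 2/5`.
-/

open Real Set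

/-- The Laplacian `u'' + u'/r` of a radial function `u(|z|)`. -/
noncomputable def radialLaplacian (f : ℝ → ℝ) (r : ℝ) : ℝ := deriv (deriv f) r + deriv f r / r

section Poincare

variable {uD : ℝ → ℝ} (huD : ∀ r ∈ Ioo (0:ℝ) 1, uD r = log (2 / (1 - r ^ 2)))
include huD

lemma deriv_poincare {r : ℝ} (hr : r ∈ Ioo (0:ℝ) 1) : deriv uD r = 2 * r / (1 - r ^ 2) := by
  have hne : (1 : ℝ) - r ^ 2 ≠ 0 := by nlinarith [hr.1, hr.2]
  have hloc : uD =ᶠ[nhds r] fun x => log 2 - log (1 - x ^ 2) := by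
    filter_upwards [isOpen_Ioo.mem_nhds hr] with x hx
    rw [huD x hx, log_div two_ne_zero (by nlinarith [hx.1, hx.2])]
  have hsq : HasDerivAt (fun x : ℝ => 1 - x ^ 2) (-(2 * r)) r := by
    simpa using (hasDerivAt_pow 2 r).const_sub 1
  rw [hloc.deriv_eq, ((hsq.log hne).const_sub (log 2)).deriv]
  field_simp

lemma deriv_deriv_poincare {r : ℝ} (hr : r ∈ Ioo (0:ℝ) 1) :
    deriv (deriv uD) r = (2 + 2 * r ^ 2) / (1 - r ^ 2) ^ 2 := by
  have hne : (1 : ℝ) - r ^ 2 ≠ 0 := by nlinarith [hr.1, hr.2]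
  have hloc : deriv uD =ᶠ[nhds r] fun x => 2 * x / (1 - x ^ 2) := by
    filter_upwards [isOpen_Ioo.mem_nhds hr] with x hx
    exact deriv_poincare huD hx
  have hsq : HasDerivAt (fun x : ℝ => 1 - x ^ 2) (-(2 * r)) r := by
    simpa using (hasDerivAt_pow 2 r).const_sub 1
  have hlin : HasDerivAt (fun x : ℝ => 2 * x) 2 r := by
    simpa using (hasDerivAt_id r).const_mul 2
  rw [hloc.deriv_eq]
  refine (hlin.div hsq hne).deriv.trans ?_
  field_simp
  ring

/-- The Poincaré metric `e^{u_D}|dz|` has curvature `-1`. -/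
lemma radialLaplacian_poincare {r : ℝ} (hr : r ∈ Ioo (0:ℝ) 1) :
    radialLaplacian uD r = exp (2 * uD r) := by
  have hpos : (0:ℝ) < 1 - r ^ 2 := by nlinarith [hr.1, hr.2]
  have hr0 : r ≠ 0 := hr.1.ne'
  have hexp : exp (2 * uD r) = (2 / (1 - r ^ 2)) ^ 2 := by
    rw [← exp_log (show 0 < 2 / (1 - r ^ 2) by positivity), ← exp_nat_mul, ← huD r hr]
    norm_num
  rw [radialLaplacian, deriv_poincare huD hr, deriv_deriv_poincare huD hr, hexp]
  field_simp
  ring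

end Poincare

lemma add_div_bounds_of_ratio_bounds {δ P Q D₁ D₂ r : ℝ} (hP : 0 < P) (hQ : 0 < Q) (hr : 0 < r)
    (h₁ : 1 - δ < D₁ / P ∧ D₁ / P < 1) (h₂ : 1 < D₂ / Q ∧ D₂ / Q < 1 + δ) :
    (1 - δ) * (Q + P / r) < D₂ + D₁ / r ∧ D₂ + D₁ / r < (1 + δ) * (Q + P / r) := by
  have hD₁lo : (1 - δ) * P < D₁ := (lt_div_iff₀ hP).mp h₁.1
  have hD₁hi : D₁ < P := (div_lt_one hP).mp h₁.2
  have hD₂lo : Q < D₂ := (one_lt_div hQ).mp h₂.1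
  have hD₂hi : D₂ < (1 + δ) * Q := (div_lt_iff₀ hQ).mp h₂.2
  have hdiv_lo : (1 - δ) * P / r < D₁ / r := div_lt_div_of_pos_right hD₁lo hr
  have hdiv_hi : D₁ / r < P / r := div_lt_div_of_pos_right hD₁hi hr
  have hPr : 0 < P / r := div_pos hP hr
  rw [mul_div_assoc] at hdiv_lo
  constructor <;> nlinarith

lemma mul_exp_bounds {δ K c v : ℝ} (hδ : δ < 1)
    (hK : (1 - δ) * exp (2 * c) < K ∧ K < (1 + δ) * exp (2 * c))
    (hv : 0 < v - c ∧ v - c < δ) :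
    (1 - δ) * exp (-(2 * δ)) < K * exp (-(2 * v)) ∧ K * exp (-(2 * v)) < 1 + δ := by
  have hsplit : K * exp (-(2 * v)) = K * exp (-(2 * c)) * exp (-(2 * (v - c))) := by
    rw [mul_assoc, ← exp_add]; ring_nf
  have hnorm : exp (2 * c) * exp (-(2 * c)) = 1 := by rw [← exp_add]; simp
  have hKlo : 1 - δ < K * exp (-(2 * c)) := by
    nlinarith [mul_lt_mul_of_pos_right hK.1 (exp_pos (-(2 * c)))]
  have hKhi : K * exp (-(2 * c)) < 1 + δ := by
    nlinarith [mul_lt_mul_of_pos_right hK.2 (exp_pos (-(2 * c)))]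
  have hexp_lo : exp (-(2 * δ)) < exp (-(2 * (v - c))) := exp_lt_exp.mpr (by linarith)
  have hexp_hi : exp (-(2 * (v - c))) < 1 := exp_lt_one_iff.mpr (by linarith)
  rw [hsplit]
  constructor
  · calc (1 - δ) * exp (-(2 * δ)) < (1 - δ) * exp (-(2 * (v - c))) :=
          mul_lt_mul_of_pos_left hexp_lo (by linarith)
      _ < K * exp (-(2 * c)) * exp (-(2 * (v - c))) :=
          mul_lt_mul_of_pos_right hKlo (exp_pos _)
  · nlinarith [exp_pos (-(2 * (v - c)))]

lemma one_div_one_add_le_mul_exp {ε : ℝ} (hε₀ : 0 < ε) (hε : ε < 2 / 5) :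
    1 / (1 + ε) ≤ (1 - ε / 4) * exp (-(2 * (ε / 4))) := by
  have hexp : 1 - 2 * (ε / 4) ≤ exp (-(2 * (ε / 4))) := by
    linarith [add_one_le_exp (-(2 * (ε / 4)))]
  calc 1 / (1 + ε) ≤ (1 - ε / 4) * (1 - 2 * (ε / 4)) := by
        rw [div_le_iff₀ (by linarith)]
        nlinarith [mul_nonneg hε₀.le (show (0:ℝ) ≤ 2 - 5 * ε + ε ^ 2 by nlinarith)]
    _ ≤ (1 - ε / 4) * exp (-(2 * (ε / 4))) := mul_le_mul_of_nonneg_left hexp (by linarith)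

theorem stmt_16_general (uD : ℝ → ℝ)
    (huD : ∀ r ∈ Set.Ioo (0:ℝ) 1, uD r = Real.log (2 / (1 - r ^ 2)))
    (u : ℝ → ℝ → ℝ)
    (hsandwich : ∀ ε ∈ Set.Ioo (0:ℝ) 1, ∀ r ∈ Set.Ioo (0:ℝ) 1,
      (0 < u ε r - uD r ∧ u ε r - uD r < ε) ∧
      (1 - ε < deriv (u ε) r / deriv uD r ∧ deriv (u ε) r / deriv uD r < 1) ∧
      (1 < deriv (deriv (u ε)) r / deriv (deriv uD) r ∧
        deriv (deriv (u ε)) r / deriv (deriv uD) r < 1 + ε)) :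
    ∃ ε₀ > (0:ℝ), ∀ ε ∈ Set.Ioo (0:ℝ) ε₀, ∀ r ∈ Set.Ioo (0:ℝ) 1,
      -(1 + ε) <
        -(deriv (deriv (u (ε/4))) r + deriv (u (ε/4)) r / r) *
          Real.exp (-(2 * u (ε/4) r)) ∧
      -(deriv (deriv (u (ε/4))) r + deriv (u (ε/4)) r / r) *
          Real.exp (-(2 * u (ε/4) r)) < -(1 / (1 + ε)) := by
  refine ⟨2 / 5, by norm_num, fun ε ⟨hε₀, hε⟩ r hr => ?_⟩
  obtain ⟨hdiff, hderiv, hderiv₂⟩ := hsandwich (ε / 4) ⟨by positivity, by linarith⟩ r hr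
  have hsq : (0:ℝ) < 1 - r ^ 2 := by nlinarith [hr.1, hr.2]
  have hP : 0 < deriv uD r := by rw [deriv_poincare huD hr]; exact div_pos (by linarith [hr.1]) hsq
  have hQ : 0 < deriv (deriv uD) r := by rw [deriv_deriv_poincare huD hr]; positivity
  have hlap := add_div_bounds_of_ratio_bounds hP hQ hr.1 hderiv hderiv₂
  rw [← radialLaplacian, radialLaplacian_poincare huD hr] at hlap
  obtain ⟨hlo, hhi⟩ := mul_exp_bounds (by linarith) hlap hdiff
  have hε' := one_div_one_add_le_mul_exp hε₀ hε
  simp only [neg_mul, neg_lt_neg_iff]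
  constructor <;> linarith

/-- Curvature estimate for the interpolated metric: if for each small `ε` the
function `u ε` is `C²` on `(0,1)`, agrees with `u_{D*}` on `[1-√(ε/A), 1)`, and
satisfies the sandwich bounds `0 < u ε - u_D < ε`, `1-ε < (u ε)'/u_D' < 1`,
`1 < (u ε)''/u_D'' < 1+ε`, then for all sufficiently small `ε` the radial metric
`e^{u_{ε/4}(r)}|dz|` has Gaussian curvature
`κ = -((u_{ε/4})'' + (u_{ε/4})'/r)·e^{-2u_{ε/4}}` strictly between `-(1+ε)` and
`-1/(1+ε)`. -/
theorem stmt_16 (A : ℝ) (hA : A > 1/3) (uD uDstar : ℝ → ℝ)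
    (huD : ∀ r ∈ Set.Ioo (0:ℝ) 1, uD r = Real.log (2 / (1 - r ^ 2)))
    (huDstar : ∀ r ∈ Set.Ioo (0:ℝ) 1,
      uDstar r = -Real.log r - Real.log (-Real.log r))
    (u : ℝ → ℝ → ℝ)
    (hsmooth : ∀ ε ∈ Set.Ioo (0:ℝ) 1, ContDiffOn ℝ 2 (u ε) (Set.Ioo (0:ℝ) 1))
    (hagree : ∀ ε ∈ Set.Ioo (0:ℝ) 1,
      ∀ r ∈ Set.Ico (1 - Real.sqrt (ε / A)) (1:ℝ), u ε r = uDstar r)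
    (hsandwich : ∀ ε ∈ Set.Ioo (0:ℝ) 1, ∀ r ∈ Set.Ioo (0:ℝ) 1,
      (0 < u ε r - uD r ∧ u ε r - uD r < ε) ∧
      (1 - ε < deriv (u ε) r / deriv uD r ∧ deriv (u ε) r / deriv uD r < 1) ∧
      (1 < deriv (deriv (u ε)) r / deriv (deriv uD) r ∧
        deriv (deriv (u ε)) r / deriv (deriv uD) r < 1 + ε)) :
    ∃ ε₀ > (0:ℝ), ∀ ε ∈ Set.Ioo (0:ℝ) ε₀, ∀ r ∈ Set.Ioo (0:ℝ) 1,
      -(1 + ε) <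
        -(deriv (deriv (u (ε/4))) r + deriv (u (ε/4)) r / r) *
          Real.exp (-(2 * u (ε/4) r)) ∧
      -(deriv (deriv (u (ε/4))) r + deriv (u (ε/4)) r / r) *
          Real.exp (-(2 * u (ε/4) r)) < -(1 / (1 + ε)) :=
  stmt_16_general uD huD u hsandwich
end
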